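/- arXiv:0901.3189 — 2 statements merged into one kernel-verified Lean document; each statement's English description precedes it below -/
import Mathlib

section
/- Let p be a prime, let j > 0 and u ≥ 0 be natural numbers, let m > 0, and set n = M[u, j]. Suppose that for all i with 0 < i < m, a·M[u+i, j−1] + b·M[u+i−1, j−1] ≡ 0 (mod p). Then for all i with 0 ≤ i < m, M[u+i, j] ≡ n · c^i (mod p). -/
/-- The matrix `M` from Definition 4.1: `M[0,0] = 1`, `M[0,j] = a^j` for `j > 0`,
`M[i,0] = c^i` for `i > 0`, and `M[i,j] = a*M[i,j-1] + b*M[i-1,j-1] + c*M[i-1,j]`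
for `i, j > 0`. -/
def M (a b c : ℕ) : ℕ → ℕ → ℕ
  | 0, 0 => 1
  | 0, j + 1 => a ^ (j + 1)
  | i + 1, 0 => c ^ (i + 1)
  | i + 1, j + 1 =>
      a * M a b c (i + 1) j + b * M a b c i j + c * M a b c i (j + 1)
  termination_by i j => i + j

theorem M_succ_succ (a b c i j : ℕ) :
    M a b c (i + 1) (j + 1) = a * M a b c (i + 1) j + b * M a b c i j + c * M a b c i (j + 1) := by
  rw [M]

theorem M_succ_succ_modEq_of_modEq_zero {p a b c i j : ℕ}
    (h : a * M a b c (i + 1) j + b * M a b c i j ≡ 0 [MOD p]) :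
    M a b c (i + 1) (j + 1) ≡ c * M a b c i (j + 1) [MOD p] := by
  simpa [M_succ_succ] using h.add_right (c * M a b c i (j + 1))

theorem Nat.modEq_mul_pow_of_succ_modEq_mul {p c m : ℕ} {f : ℕ → ℕ}
    (step : ∀ i, i + 1 < m → f (i + 1) ≡ c * f i [MOD p]) :
    ∀ i, i < m → f i ≡ f 0 * c ^ i [MOD p] := by
  intro i
  induction i with
  | zero => simp [Nat.ModEq.refl]
  | succ i ih =>
    intro hi
    calc f (i + 1) ≡ c * f i [MOD p] := step i hi
      _ ≡ c * (f 0 * c ^ i) [MOD p] := (ih (by omega)).mul_left c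
      _ = f 0 * c ^ (i + 1) := by ring

theorem M_adjacent_column_b_general (p a b c : ℕ) (j u m n : ℕ)
    (hj : 0 < j) (hn : n = M a b c u j)
    (hyp : ∀ i : ℕ, 0 < i → i < m →
      a * M a b c (u + i) (j - 1) + b * M a b c (u + i - 1) (j - 1) ≡ 0 [MOD p]) :
    ∀ i : ℕ, i < m → M a b c (u + i) j ≡ n * c ^ i [MOD p] := by
  obtain ⟨j, rfl⟩ := Nat.exists_eq_add_one_of_ne_zero hj.ne'
  subst hn
  refine Nat.modEq_mul_pow_of_succ_modEq_mul (f := fun i => M a b c (u + i) (j + 1)) fun i hi => ?_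
  have h := hyp (i + 1) i.succ_pos hi
  simp only [Nat.add_sub_cancel, ← Nat.add_assoc] at h
  exact M_succ_succ_modEq_of_modEq_zero h

/-- Lemma 4.12(b) (adjacent column lemma): fix a column `j > 0` and a row `u`, and let
`n = M[u, j]`.  If for all `0 < i < m` we have
`a·M[u+i, j-1] + b·M[u+i-1, j-1] ≡ 0 (mod p)`, then
`M[u+i, j] ≡ n · c^i (mod p)` for all `i < m`. -/
theorem M_adjacent_column_b (p a b c : ℕ) (hp : p.Prime) (j u m n : ℕ)
    (hj : 0 < j) (hm : 0 < m) (hn : n = M a b c u j)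
    (hyp : ∀ i : ℕ, 0 < i → i < m →
      a * M a b c (u + i) (j - 1) + b * M a b c (u + i - 1) (j - 1) ≡ 0 [MOD p]) :
    ∀ i : ℕ, i < m → M a b c (u + i) j ≡ n * c ^ i [MOD p] :=
  M_adjacent_column_b_general p a b c j u m n hj hn hyp
end

section
/- Let p be a prime not dividing any of a, b, c, and let k ≥ 0. Then for all i with 0 < i < p^k, a·M[i, p^k−1] + b·M[i−1, p^k−1] ≡ 0 (mod p), and for all j with 0 < j < p^k, b·M[p^k−1, j−1] + c·M[p^k−1, j] ≡ 0 (mod p). -/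
open PowerSeries

theorem M_zero_left (a b c j : ℕ) : M a b c 0 j = a ^ j := by
  cases j <;> simp [M]

theorem M_zero_right (a b c i : ℕ) : M a b c i 0 = c ^ i := by
  cases i <;> simp [M]

theorem M_comm (a b c i j : ℕ) : M a b c i j = M c b a j i := by
  induction i, j using M.induct with
  | case1 | case2 | case3 => simp [M_zero_left, M_zero_right]
  | case4 i j h₁ h₂ h₃ => rw [M, M, h₁, h₂, h₃]; ring

section ColumnSeries

variable {R : Type*} (a b c : ℕ)

noncomputable def columnSeries [Semiring R] (j : ℕ) : R⟦X⟧ :=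
  mk fun i => (M a b c i j : R)

theorem coeff_succ_mul_columnSeries [Semiring R] (i j : ℕ) :
    coeff (i + 1) ((C (a : R) + C (b : R) * X) * columnSeries a b c j) =
      (a : R) * M a b c (i + 1) j + b * M a b c i j := by
  simp only [add_mul, mul_assoc, map_add, coeff_C_mul, coeff_succ_X_mul, columnSeries, coeff_mk]

theorem one_sub_mul_columnSeries_zero [Ring R] :
    (1 - C (c : R) * X) * columnSeries a b c 0 = 1 := by
  ext (_ | i) <;>
    simp only [sub_mul, one_mul, mul_assoc, map_sub, coeff_C_mul, coeff_succ_X_mul,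
      coeff_zero_X_mul, columnSeries, coeff_mk, M_zero_right, coeff_one] <;>
    simp [pow_succ']

theorem one_sub_mul_columnSeries_succ [Ring R] (j : ℕ) :
    (1 - C (c : R) * X) * columnSeries a b c (j + 1) =
      (C (a : R) + C (b : R) * X) * columnSeries a b c j := by
  ext (_ | i) <;>
    simp only [sub_mul, add_mul, one_mul, mul_assoc, map_add, map_sub, coeff_C_mul,
      coeff_succ_X_mul, coeff_zero_X_mul, columnSeries, coeff_mk, M_zero_left] <;>
    simp [M, pow_succ']

theorem one_sub_pow_mul_columnSeries [CommRing R] (j : ℕ) :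
    (1 - C (c : R) * X) ^ (j + 1) * columnSeries a b c j = (C (a : R) + C (b : R) * X) ^ j := by
  induction j with
  | zero => simpa using one_sub_mul_columnSeries_zero (R := R) a b c
  | succ j ih =>
    rw [pow_succ, mul_assoc, one_sub_mul_columnSeries_succ, mul_left_comm, ih, pow_succ']

theorem coeff_mul_columnSeries_eq_zero [CommRing R] (p : ℕ) [Fact p.Prime] [CharP R p]
    (k i : ℕ) (hi₀ : 0 < i) (hi : i < p ^ k) :
    coeff i ((C (a : R) + C (b : R) * X) * columnSeries a b c (p ^ k - 1)) = 0 := by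
  have : CharP R⟦X⟧ p := charP_of_injective_ringHom (C_injective (R := R)) p
  set N := p ^ k
  set g : R⟦X⟧ := (C (a : R) + C (b : R) * X) * columnSeries a b c (N - 1)
  have hN : N - 1 + 1 = N := Nat.sub_add_cancel (Nat.one_le_pow _ _ (Fact.out : p.Prime).pos)
  have key : (1 - C ((c : R) ^ N) * X ^ N) * g = C ((a : R) ^ N) + C ((b : R) ^ N) * X ^ N :=
    calc (1 - C ((c : R) ^ N) * X ^ N) * g
        = (C (a : R) + C (b : R) * X) *
            ((1 - C (c : R) * X) ^ (N - 1 + 1) * columnSeries a b c (N - 1)) := by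
          rw [hN, sub_pow_char_pow, one_pow, mul_pow, ← map_pow]; ring
      _ = (C (a : R) + C (b : R) * X) ^ N := by
          rw [one_sub_pow_mul_columnSeries, ← pow_succ', hN]
      _ = C ((a : R) ^ N) + C ((b : R) ^ N) * X ^ N := by
          rw [add_pow_char_pow, mul_pow, map_pow, map_pow]
  simpa only [sub_mul, one_mul, mul_assoc, map_sub, map_add, coeff_C_mul, coeff_X_pow_mul',
    coeff_X_pow, coeff_C, hi.not_ge, hi.ne, hi₀.ne', if_false, mul_zero, sub_zero,
    add_zero] using congrArg (coeff i) key

end ColumnSeries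

theorem M_last_column_modEq_zero (p a b c k i : ℕ) (hp : p.Prime) (hi₀ : 0 < i)
    (hi : i < p ^ k) :
    a * M a b c i (p ^ k - 1) + b * M a b c (i - 1) (p ^ k - 1) ≡ 0 [MOD p] := by
  have : Fact p.Prime := ⟨hp⟩
  obtain ⟨i, rfl⟩ := Nat.exists_eq_add_one_of_ne_zero hi₀.ne'
  rw [Nat.modEq_zero_iff_dvd, ← ZMod.natCast_eq_zero_iff]
  push_cast
  rw [← coeff_succ_mul_columnSeries]
  exact coeff_mul_columnSeries_eq_zero a b c p k _ hi₀ hi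

theorem M_sum_block_general (p a b c : ℕ) (hp : p.Prime) (k : ℕ) :
    (∀ i : ℕ, 0 < i → i < p ^ k →
      a * M a b c i (p ^ k - 1) + b * M a b c (i - 1) (p ^ k - 1) ≡ 0 [MOD p]) ∧
    (∀ j : ℕ, 0 < j → j < p ^ k →
      b * M a b c (p ^ k - 1) (j - 1) + c * M a b c (p ^ k - 1) j ≡ 0 [MOD p]) := by
  refine ⟨fun i => M_last_column_modEq_zero p a b c k i hp, fun j hj₀ hj => ?_⟩
  rw [M_comm a, M_comm a, add_comm]
  exact M_last_column_modEq_zero p c b a k j hp hj₀ hj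

/-- Part (b) of the induction in the proof of Theorem 4.4: for `p` prime not dividing
`a`, `b`, or `c`, and any `k ≥ 0`: for `0 < i < p^k`,
`a·M[i, p^k-1] + b·M[i-1, p^k-1] ≡ 0 (mod p)`, and for `0 < j < p^k`,
`b·M[p^k-1, j-1] + c·M[p^k-1, j] ≡ 0 (mod p)`. -/
theorem M_sum_block (p a b c : ℕ) (hp : p.Prime)
    (ha : ¬ p ∣ a) (hb : ¬ p ∣ b) (hc : ¬ p ∣ c) (k : ℕ) :
    (∀ i : ℕ, 0 < i → i < p ^ k →
      a * M a b c i (p ^ k - 1) + b * M a b c (i - 1) (p ^ k - 1) ≡ 0 [MOD p]) ∧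
    (∀ j : ℕ, 0 < j → j < p ^ k →
      b * M a b c (p ^ k - 1) (j - 1) + c * M a b c (p ^ k - 1) j ≡ 0 [MOD p]) :=
  M_sum_block_general p a b c hp k
end
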